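/- For every n ≥ 1, the restriction map ρ : C(S_n) → C(S_{n−1}), which restricts an integer-valued class function on S_n along the standard inclusion S_{n−1} ⊂ S_n, is a surjective, degree-preserving ring homomorphism with respect to the cup product, and satisfies ρ(ε_n) = ε_{n−1}. -/

import Mathlib

noncomputable section

/-- `permDeg π` is the minimal number of transpositions whose product is `π`. -/
def permDeg {n : ℕ} (π : Equiv.Perm (Fin n)) : ℕ :=
  sInf {d | ∃ l : List (Equiv.Perm (Fin n)),
    (∀ t ∈ l, t.IsSwap) ∧ l.prod = π ∧ l.length = d}

/-- The cup product on the group ring `ℤ[S_n]`, extended bilinearly from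
`σ ∪ π = σπ` if `deg σ + deg π = deg (σπ)` and `0` otherwise. -/
def cup {n : ℕ} (f g : MonoidAlgebra ℤ (Equiv.Perm (Fin n))) :
    MonoidAlgebra ℤ (Equiv.Perm (Fin n)) :=
  f.coeff.sum fun σ a => g.coeff.sum fun π b =>
    if permDeg σ + permDeg π = permDeg (σ * π)
    then MonoidAlgebra.single (σ * π) (a * b) else 0

/-- `eps n` is the alternating element `Σ_π sgn(π) π` of `ℤ[S_n]`. -/
def eps (n : ℕ) : MonoidAlgebra ℤ (Equiv.Perm (Fin n)) :=
  ∑ π : Equiv.Perm (Fin n),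
    MonoidAlgebra.single π ((Equiv.Perm.sign π : ℤˣ) : ℤ)

/-- The standard inclusion `S_n ⊂ S_{n+1}` (permutations fixing the last letter). -/
def iotaPerm (n : ℕ) (π : Equiv.Perm (Fin n)) : Equiv.Perm (Fin (n + 1)) :=
  π.viaFintypeEmbedding Fin.castSuccEmb

/-- `f ∈ ℤ[S_n]` is a class function if its coefficients are constant on
conjugacy classes. -/
def IsClassFun {n : ℕ} (f : MonoidAlgebra ℤ (Equiv.Perm (Fin n))) : Prop :=
  ∀ σ π : Equiv.Perm (Fin n), f.coeff (σ * π * σ⁻¹) = f.coeff π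

/-- The restriction map `ρ : C(S_{n+1}) → C(S_n)` along the standard
inclusion `S_n ⊂ S_{n+1}`. -/
def rho (n : ℕ) (f : MonoidAlgebra ℤ (Equiv.Perm (Fin (n + 1)))) :
    MonoidAlgebra ℤ (Equiv.Perm (Fin n)) :=
  MonoidAlgebra.ofCoeff (Finsupp.equivFunOnFinite.symm fun π => f.coeff (iotaPerm n π))


/-!
If transpositions `t₁, …, t_k` multiply to `π ∈ S_n`, every cycle of `π` lies in one orbit of
`⟨t₁, …, t_k⟩`, and there are at least `n - k` such orbits, as each transposition merges at most
two of them. On the other hand, splitting off fixed points one at a time via `π ↦ (x πx) π`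
gives `deg π + c(π) ≤ n`, where `c(π)` counts the cycles of `π` including fixed points. So for a
minimal factorization (`k = deg π`) the orbits are exactly the cycles of `π`, and every `tᵢ`
fixes every fixed point of `π`.

Applied to the concatenation of minimal factorizations of `σ` and `τ`: if
`deg σ + deg τ = deg (στ)`, then `σ` and `τ` fix every fixed point of `στ`. Hence the terms of a
cup product that land in `S_{n-1}` come from factors in `S_{n-1}`, making restriction
multiplicative, and minimal factorizations of elements of `S_{n-1}` stay in `S_{n-1}`, so the
degree is preserved. Surjectivity holds because class functions are functions of the cycle type,
which the inclusion preserves.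
-/

open Equiv Equiv.Perm Function

section Partitions

variable {α : Type*}

theorem Setoid.map_of_le_surjective {r s : Setoid α} (h : r ≤ s) :
    Surjective (Setoid.map_of_le h) :=
  fun q => q.inductionOn fun x => ⟨Quotient.mk r x, rfl⟩

theorem Setoid.card_quotient_le_of_le [Finite α] {r s : Setoid α} (h : r ≤ s) :
    Nat.card (Quotient s) ≤ Nat.card (Quotient r) :=
  Nat.card_le_card_of_surjective _ (map_of_le_surjective h)

theorem Setoid.card_quotient_lt_of_le [Finite α] {r s : Setoid α} (h : r ≤ s) {x y : α}
    (hs : s x y) (hr : ¬ r x y) : Nat.card (Quotient s) < Nat.card (Quotient r) := by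
  refine (card_quotient_le_of_le h).lt_of_ne fun hcard => hr (Quotient.exact ?_)
  have hbij := (Nat.bijective_iff_surjective_and_card (map_of_le h)).2
    ⟨map_of_le_surjective h, hcard.symm⟩
  exact hbij.injective (Quotient.sound hs)

theorem Equiv.Perm.sameCycle_setoid_le [Finite α] {σ : Perm α} {r : Setoid α}
    (h : ∀ x, r x (σ x)) : SameCycle.setoid σ ≤ r := by
  intro x y hxy
  obtain ⟨i, rfl⟩ := hxy.exists_nat_pow_eq
  clear hxy
  induction i with
  | zero => exact r.refl x
  | succ i ih => rw [pow_succ', mul_apply]; exact r.trans ih (h _)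

theorem Equiv.Perm.list_prod_apply_eq_self {l : List (Perm α)} {x : α}
    (h : ∀ t ∈ l, t x = x) : l.prod x = x :=
  Subgroup.list_prod_mem (K := MulAction.stabilizer (Perm α) x) h

def orbitSetoid (l : List (Perm α)) : Setoid α :=
  Relation.EqvGen.setoid fun x y => ∃ t ∈ l, t x = y

theorem orbitSetoid_apply {l : List (Perm α)} {t : Perm α} (ht : t ∈ l) (x : α) :
    orbitSetoid l x (t x) :=
  Relation.EqvGen.rel _ _ ⟨t, ht, rfl⟩

theorem orbitSetoid_le_cons (t : Perm α) (l : List (Perm α)) :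
    orbitSetoid l ≤ orbitSetoid (t :: l) :=
  Setoid.eqvGen_mono fun _ _ ⟨s, hs, h⟩ => ⟨s, List.mem_cons_of_mem t hs, h⟩

theorem sameCycle_prod_le_orbitSetoid [Finite α] (l : List (Perm α)) :
    SameCycle.setoid l.prod ≤ orbitSetoid l := by
  refine sameCycle_setoid_le fun x => ?_
  induction l with
  | nil => exact (orbitSetoid []).refl x
  | cons t l ih =>
    rw [List.prod_cons, mul_apply]
    exact (orbitSetoid _).trans (orbitSetoid_le_cons t l ih)
      (orbitSetoid_apply List.mem_cons_self _)

variable [DecidableEq α]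

theorem card_quotient_orbitSetoid_le_cons_add_one [Finite α] {t : Perm α} (ht : t.IsSwap)
    (l : List (Perm α)) :
    Nat.card (Quotient (orbitSetoid l)) ≤ Nat.card (Quotient (orbitSetoid (t :: l))) + 1 := by
  classical
  obtain ⟨a, b, -, rfl⟩ := ht
  set r := orbitSetoid l
  let φ : α → Quotient r := fun x => if r x a then Quotient.mk r b else Quotient.mk r x
  have hφ : orbitSetoid (swap a b :: l) ≤ Setoid.ker φ := by
    refine Setoid.eqvGen_le ?_
    rintro x _ ⟨t, ht, rfl⟩
    rw [Setoid.ker_def]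
    rcases List.mem_cons.1 ht with rfl | ht
    · rcases eq_or_ne x a with rfl | hxa
      · simp [φ]
      rcases eq_or_ne x b with rfl | hxb
      · simp [φ]
      · rw [swap_apply_of_ne_of_ne hxa hxb]
    · have hxt := orbitSetoid_apply ht x
      have hiff : r x a ↔ r (t x) a := ⟨r.trans (r.symm hxt), r.trans hxt⟩
      have hmk : Quotient.mk r x = Quotient.mk r (t x) := Quotient.sound hxt
      simp only [φ, hiff, hmk]
  let ψ : Quotient (orbitSetoid (swap a b :: l)) → Quotient r := Quotient.lift φ hφ
  have hrange : {Quotient.mk r a}ᶜ ⊆ Set.range ψ := by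
    rintro ⟨x⟩ hx
    exact ⟨Quotient.mk _ x, if_neg fun h => hx (Quotient.sound h)⟩
  calc Nat.card (Quotient r) = ({Quotient.mk r a}ᶜ : Set _).ncard + 1 := by
        rw [← Set.ncard_univ, ← Set.ncard_sdiff_singleton_add_one (Set.mem_univ _),
          Set.compl_eq_univ_sdiff]
    _ ≤ (Set.range ψ).ncard + 1 := by gcongr; exact Set.toFinite _
    _ ≤ _ := by gcongr; exact Finite.card_range_le ψ

theorem card_le_card_quotient_orbitSetoid_add_length [Finite α] {l : List (Perm α)}
    (hl : ∀ t ∈ l, t.IsSwap) : Nat.card α ≤ Nat.card (Quotient (orbitSetoid l)) + l.length := by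
  induction l with
  | nil =>
    have hbot : orbitSetoid ([] : List (Perm α)) ≤ ⊥ := Setoid.eqvGen_le (by simp)
    simpa [Nat.card_congr (Setoid.quotientBotEquiv (α := α))] using
      Setoid.card_quotient_le_of_le hbot
  | cons t l ih =>
    have := card_quotient_orbitSetoid_le_cons_add_one (hl t List.mem_cons_self) l
    have := ih fun s hs => hl s (List.mem_cons_of_mem t hs)
    simp only [List.length_cons]
    omega

theorem apply_eq_self_of_length_add_card_le [Finite α] {l : List (Perm α)}
    (hl : ∀ t ∈ l, t.IsSwap)
    (hlen : l.length + Nat.card (Quotient (SameCycle.setoid l.prod)) ≤ Nat.card α)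
    {x : α} (hx : l.prod x = x) {t : Perm α} (ht : t ∈ l) : t x = x := by
  by_contra htx
  have hsep : ¬ l.prod.SameCycle x (t x) := fun h => htx (h.eq_of_left hx).symm
  have := Setoid.card_quotient_lt_of_le (sameCycle_prod_le_orbitSetoid l)
    (orbitSetoid_apply ht x) hsep
  have := card_le_card_quotient_orbitSetoid_add_length hl
  omega

end Partitions

section Degree

variable {n : ℕ}

theorem permDeg_le {l : List (Perm (Fin n))} (hl : ∀ t ∈ l, t.IsSwap) :
    permDeg l.prod ≤ l.length := by
  unfold permDeg
  exact Nat.sInf_le ⟨l, hl, rfl, rfl⟩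

theorem exists_list_length_eq_permDeg (π : Perm (Fin n)) :
    ∃ l : List (Perm (Fin n)), (∀ t ∈ l, t.IsSwap) ∧ l.prod = π ∧ l.length = permDeg π := by
  obtain ⟨l, hprod, hl⟩ := (truncSwapFactors π).out
  exact Nat.sInf_mem (s := {d | ∃ l : List (Perm (Fin n)),
    (∀ t ∈ l, t.IsSwap) ∧ l.prod = π ∧ l.length = d}) ⟨l.length, l, hl, hprod, rfl⟩

theorem permDeg_one : permDeg (1 : Perm (Fin n)) = 0 :=
  Nat.le_zero.mp (permDeg_le (l := []) (by simp))

theorem permDeg_swap_mul_le {x y : Fin n} (hxy : x ≠ y) (σ : Perm (Fin n)) :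
    permDeg (swap x y * σ) ≤ permDeg σ + 1 := by
  obtain ⟨l, hl, rfl, hlen⟩ := exists_list_length_eq_permDeg σ
  rw [← hlen, ← List.prod_cons]
  refine permDeg_le fun t ht => ?_
  rcases List.mem_cons.1 ht with rfl | ht
  exacts [⟨x, y, hxy, rfl⟩, hl t ht]

theorem permDeg_add_card_sameCycle_le (σ : Perm (Fin n)) :
    permDeg σ + Nat.card (Quotient (SameCycle.setoid σ)) ≤ n := by
  by_cases hσ : σ = 1
  · subst hσ
    simpa [permDeg_one] using Nat.card_le_card_of_surjective
      (Quotient.mk (SameCycle.setoid (1 : Perm (Fin n)))) Quotient.mk_surjective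
  obtain ⟨x, hx⟩ : ∃ x, σ x ≠ x := by
    by_contra! h
    exact hσ (Equiv.ext h)
  have hdecr := card_support_swap_mul hx
  set σ' := swap x (σ x) * σ
  have hdeg : permDeg σ ≤ permDeg σ' + 1 := by
    simpa [σ', ← mul_assoc] using permDeg_swap_mul_le hx.symm σ'
  have hle : SameCycle.setoid σ' ≤ SameCycle.setoid σ := by
    refine sameCycle_setoid_le fun y => ?_
    simp only [σ', mul_apply, swap_apply_def]
    split_ifs with h₁ h₂
    · rw [← h₁]
      exact sameCycle_apply_right.2 (sameCycle_apply_right.2 (SameCycle.refl _ _))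
    · rw [σ.injective h₂]
    · exact sameCycle_apply_right.2 (SameCycle.refl _ _)
  have hfix : σ' x = x := by simp [σ']
  have hlt := Setoid.card_quotient_lt_of_le hle (⟨1, rfl⟩ : σ.SameCycle x (σ x))
    fun h => hx (h.eq_of_left hfix).symm
  have := permDeg_add_card_sameCycle_le σ'
  omega
termination_by σ.support.card

theorem apply_eq_self_of_length_eq_permDeg {l : List (Perm (Fin n))} (hl : ∀ t ∈ l, t.IsSwap)
    (hlen : l.length = permDeg l.prod) {x : Fin n} (hx : l.prod x = x) {t : Perm (Fin n)}
    (ht : t ∈ l) : t x = x := by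
  refine apply_eq_self_of_length_add_card_le hl ?_ hx ht
  simpa [hlen] using permDeg_add_card_sameCycle_le l.prod

theorem apply_eq_self_of_permDeg_add_eq {σ τ : Perm (Fin n)}
    (h : permDeg σ + permDeg τ = permDeg (σ * τ)) {x : Fin n} (hx : (σ * τ) x = x) :
    σ x = x ∧ τ x = x := by
  obtain ⟨L, hL, rfl, hLlen⟩ := exists_list_length_eq_permDeg σ
  obtain ⟨M, hM, rfl, hMlen⟩ := exists_list_length_eq_permDeg τ
  rw [← List.prod_append] at h hx
  have hfix : ∀ t ∈ L ++ M, t x = x := fun t ht =>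
    apply_eq_self_of_length_eq_permDeg (fun s hs => (List.mem_append.1 hs).elim (hL s) (hM s))
      (by rw [List.length_append, hLlen, hMlen, h]) hx ht
  exact ⟨list_prod_apply_eq_self fun t ht => hfix t (List.mem_append_left M ht),
    list_prod_apply_eq_self fun t ht => hfix t (List.mem_append_right L ht)⟩

end Degree

section Inclusion

variable {n : ℕ}

def iotaPermHom (n : ℕ) : Perm (Fin n) →* Perm (Fin (n + 1)) :=
  extendDomainHom Fin.castSuccEmb.toEquivRange

theorem iotaPerm_mul (σ τ : Perm (Fin n)) :
    iotaPerm n (σ * τ) = iotaPerm n σ * iotaPerm n τ :=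
  map_mul (iotaPermHom n) σ τ

theorem iotaPerm_inv (σ : Perm (Fin n)) : iotaPerm n σ⁻¹ = (iotaPerm n σ)⁻¹ :=
  map_inv (iotaPermHom n) σ

theorem iotaPerm_list_prod (l : List (Perm (Fin n))) :
    iotaPerm n l.prod = (l.map (iotaPerm n)).prod :=
  map_list_prod (iotaPermHom n) l

theorem iotaPerm_injective : Injective (iotaPerm n) :=
  extendDomainHom_injective _

@[simp]
theorem iotaPerm_castSucc (π : Perm (Fin n)) (i : Fin n) :
    iotaPerm n π i.castSucc = (π i).castSucc :=
  viaFintypeEmbedding_apply_image π Fin.castSuccEmb i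

@[simp]
theorem iotaPerm_last (π : Perm (Fin n)) : iotaPerm n π (Fin.last n) = Fin.last n :=
  viaFintypeEmbedding_apply_notMem_range _ _ (by simp)

theorem cycleType_iotaPerm (π : Perm (Fin n)) : (iotaPerm n π).cycleType = π.cycleType :=
  cycleType_extendDomain _

theorem sign_iotaPerm (π : Perm (Fin n)) : sign (iotaPerm n π) = sign π :=
  viaFintypeEmbedding_sign π Fin.castSuccEmb

theorem isSwap_iotaPerm_iff {π : Perm (Fin n)} : (iotaPerm n π).IsSwap ↔ π.IsSwap := by
  rw [isSwap_iff_cycleType, isSwap_iff_cycleType, cycleType_iotaPerm]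

theorem exists_iotaPerm_eq {σ : Perm (Fin (n + 1))} (hσ : σ (Fin.last n) = Fin.last n) :
    ∃ π : Perm (Fin n), iotaPerm n π = σ := by
  have hne : ∀ τ : Perm (Fin (n + 1)), τ (Fin.last n) = Fin.last n →
      ∀ i : Fin n, τ i.castSucc ≠ Fin.last n :=
    fun τ hτ i h => Fin.castSucc_ne_last i (τ.injective (h.trans hτ.symm))
  have hσinv : σ⁻¹ (Fin.last n) = Fin.last n := by rw [Perm.inv_eq_iff_eq, hσ]
  refine ⟨⟨fun i => (σ i.castSucc).castPred (hne σ hσ i),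
    fun i => (σ⁻¹ i.castSucc).castPred (hne σ⁻¹ hσinv i), fun i => by simp,
    fun i => by simp⟩, Equiv.ext fun x => ?_⟩
  induction x using Fin.lastCases <;> simp [hσ]

instance : CanLift (Perm (Fin (n + 1))) (Perm (Fin n)) (iotaPerm n)
    fun σ => σ (Fin.last n) = Fin.last n where
  prf _ := exists_iotaPerm_eq

theorem permDeg_iotaPerm (π : Perm (Fin n)) : permDeg (iotaPerm n π) = permDeg π := by
  apply le_antisymm
  · obtain ⟨l, hl, rfl, hlen⟩ := exists_list_length_eq_permDeg π
    rw [← hlen, iotaPerm_list_prod, ← List.length_map (iotaPerm n)]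
    exact permDeg_le (by simpa [isSwap_iotaPerm_iff] using hl)
  · obtain ⟨N, hN, hprod, hlen⟩ := exists_list_length_eq_permDeg (iotaPerm n π)
    have hfix : ∀ t ∈ N, t (Fin.last n) = Fin.last n := fun t ht =>
      apply_eq_self_of_length_eq_permDeg hN (hprod ▸ hlen) (by rw [hprod, iotaPerm_last]) ht
    lift N to List (Perm (Fin n)) using hfix
    rw [← iotaPerm_list_prod] at hprod
    obtain rfl := iotaPerm_injective hprod
    rw [← hlen, List.length_map]
    exact permDeg_le (by simpa [isSwap_iotaPerm_iff] using hN)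

end Inclusion

section GroupRing

variable {n : ℕ}

theorem rho_coeff (f : MonoidAlgebra ℤ (Perm (Fin (n + 1)))) (π : Perm (Fin n)) :
    (rho n f).coeff π = f.coeff (iotaPerm n π) := by
  simp [rho]

theorem eps_coeff (π : Perm (Fin n)) : (eps n).coeff π = sign π := by
  classical
  simp [eps, MonoidAlgebra.coeff_sum, MonoidAlgebra.coeff_single, Finsupp.single_apply]

def cupPairs (x : Perm (Fin n)) : Finset (Perm (Fin n) × Perm (Fin n)) :=
  {p | permDeg p.1 + permDeg p.2 = permDeg (p.1 * p.2) ∧ p.1 * p.2 = x}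

theorem coeff_cup (f g : MonoidAlgebra ℤ (Perm (Fin n))) (x : Perm (Fin n)) :
    (cup f g).coeff x = ∑ p ∈ cupPairs x, f.coeff p.1 * g.coeff p.2 := by
  classical
  rw [cup, Finsupp.sum_fintype _ _ (by simp), MonoidAlgebra.coeff_sum, Finsupp.finsetSum_apply,
    cupPairs, Finset.sum_filter, ← Finset.univ_product_univ, Finset.sum_product]
  refine Finset.sum_congr rfl fun σ _ => ?_
  rw [Finsupp.sum_fintype _ _ (by simp), MonoidAlgebra.coeff_sum, Finsupp.finsetSum_apply]
  refine Finset.sum_congr rfl fun τ _ => ?_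
  split_ifs <;> simp_all [MonoidAlgebra.coeff_single]

theorem cupPairs_iotaPerm (π : Perm (Fin n)) :
    cupPairs (iotaPerm n π) = (cupPairs π).image (Prod.map (iotaPerm n) (iotaPerm n)) := by
  ext ⟨σ, τ⟩
  simp only [cupPairs, Finset.mem_image, Finset.mem_filter, Finset.mem_univ, true_and,
    Prod.exists, Prod.map_apply, Prod.mk.injEq]
  constructor
  · rintro ⟨hdeg, hprod⟩
    obtain ⟨hσ, hτ⟩ := apply_eq_self_of_permDeg_add_eq hdeg (by rw [hprod, iotaPerm_last])
    lift σ to Perm (Fin n) using hσ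
    lift τ to Perm (Fin n) using hτ
    rw [← iotaPerm_mul, permDeg_iotaPerm, permDeg_iotaPerm, permDeg_iotaPerm] at hdeg
    exact ⟨σ, τ, ⟨hdeg, iotaPerm_injective (by rw [iotaPerm_mul, hprod])⟩, rfl, rfl⟩
  · rintro ⟨σ, τ, ⟨hdeg, rfl⟩, rfl, rfl⟩
    rw [← iotaPerm_mul, permDeg_iotaPerm, permDeg_iotaPerm, permDeg_iotaPerm]
    exact ⟨hdeg, rfl⟩

theorem rho_cup (f g : MonoidAlgebra ℤ (Perm (Fin (n + 1)))) :
    rho n (cup f g) = cup (rho n f) (rho n g) := by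
  ext π
  rw [rho_coeff, coeff_cup, coeff_cup, cupPairs_iotaPerm,
    Finset.sum_image fun p _ q _ h => (iotaPerm_injective.prodMap iotaPerm_injective) h]
  simp only [rho_coeff, Prod.map_fst, Prod.map_snd]

theorem IsClassFun.rho {f : MonoidAlgebra ℤ (Perm (Fin (n + 1)))} (hf : IsClassFun f) :
    IsClassFun (rho n f) := by
  intro σ π
  rw [rho_coeff, rho_coeff, iotaPerm_mul, iotaPerm_mul, iotaPerm_inv]
  exact hf _ _

theorem IsClassFun.coeff_eq_of_cycleType_eq {f : MonoidAlgebra ℤ (Perm (Fin n))}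
    (hf : IsClassFun f) {σ τ : Perm (Fin n)} (h : σ.cycleType = τ.cycleType) :
    f.coeff σ = f.coeff τ := by
  obtain ⟨c, rfl⟩ := isConj_iff.1 (isConj_iff_cycleType_eq.2 h)
  exact (hf c σ).symm

open Classical in
def extendByCycleType (g : MonoidAlgebra ℤ (Perm (Fin n))) :
    MonoidAlgebra ℤ (Perm (Fin (n + 1))) :=
  MonoidAlgebra.ofCoeff (Finsupp.equivFunOnFinite.symm fun τ =>
    if h : ∃ π : Perm (Fin n), π.cycleType = τ.cycleType then g.coeff h.choose else 0)

open Classical in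
theorem coeff_extendByCycleType (g : MonoidAlgebra ℤ (Perm (Fin n))) (τ : Perm (Fin (n + 1))) :
    (extendByCycleType g).coeff τ =
      if h : ∃ π : Perm (Fin n), π.cycleType = τ.cycleType then g.coeff h.choose else 0 := by
  simp [extendByCycleType]

theorem isClassFun_extendByCycleType (g : MonoidAlgebra ℤ (Perm (Fin n))) :
    IsClassFun (extendByCycleType g) := by
  intro σ π
  simp only [coeff_extendByCycleType, cycleType_conj]

theorem rho_extendByCycleType {g : MonoidAlgebra ℤ (Perm (Fin n))} (hg : IsClassFun g) :
    rho n (extendByCycleType g) = g := by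
  have hπ (π : Perm (Fin n)) : ∃ π' : Perm (Fin n), π'.cycleType = (iotaPerm n π).cycleType :=
    ⟨π, (cycleType_iotaPerm π).symm⟩
  ext π
  rw [rho_coeff, coeff_extendByCycleType, dif_pos (hπ π)]
  exact hg.coeff_eq_of_cycleType_eq ((hπ π).choose_spec.trans (cycleType_iotaPerm π))

theorem rho_eps : rho n (eps (n + 1)) = eps n := by
  ext π
  rw [rho_coeff, eps_coeff, eps_coeff, sign_iotaPerm]

end GroupRing

/-- For every `n ≥ 1`, the restriction map `ρ : C(S_n) → C(S_{n-1})` maps class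
functions to class functions, is surjective, degree preserving and
multiplicative with respect to the cup product, and maps `ε_n` to `ε_{n-1}`. -/
theorem rho_properties (n : ℕ) :
    (∀ f : MonoidAlgebra ℤ (Equiv.Perm (Fin (n + 1))),
      IsClassFun f → IsClassFun (rho n f)) ∧
    (∀ g : MonoidAlgebra ℤ (Equiv.Perm (Fin n)), IsClassFun g →
      ∃ f : MonoidAlgebra ℤ (Equiv.Perm (Fin (n + 1))),
        IsClassFun f ∧ rho n f = g) ∧
    (∀ d : ℕ, ∀ f : MonoidAlgebra ℤ (Equiv.Perm (Fin (n + 1))), IsClassFun f →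
      (∀ π ∈ f.coeff.support, permDeg π = d) →
      ∀ π ∈ (rho n f).coeff.support, permDeg π = d) ∧
    (∀ f g : MonoidAlgebra ℤ (Equiv.Perm (Fin (n + 1))),
      IsClassFun f → IsClassFun g →
      rho n (cup f g) = cup (rho n f) (rho n g)) ∧
    rho n (eps (n + 1)) = eps n := by
  refine ⟨fun f hf => hf.rho, fun g hg => ⟨extendByCycleType g,
    isClassFun_extendByCycleType g, rho_extendByCycleType hg⟩, fun d f _ hf π hπ => ?_,
    fun f g _ _ => rho_cup f g, rho_eps⟩
  rw [← permDeg_iotaPerm]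
  exact hf _ (by simpa [rho_coeff] using hπ)

end
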